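/- Let γ > 0 and for x ∈ ℝ^d let μ_x denote the density (with respect to Lebesgue measure) of the uniform distribution on the closed Euclidean ball of radius γ centered at x. Then for all x, y ∈ ℝ^d, ∫_{ℝ^d} |μ_y(z) − μ_x(z)| dz ≤ (√d/γ) ‖y − x‖₂. -/

import Mathlib

/-!
The function `|μ_y - μ_x|` is `V⁻¹` times the indicator of the symmetric difference of the two
balls, `V` being the volume of a ball of radius `γ`. A rigid motion moves the centres to `0` and
`t • e₀` with `t = ‖y - x‖`; each line parallel to `e₀` then meets the two balls in two intervals
that are translates of each other by `t`, so by Fubini the symmetric difference has volume at most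
`2t` times the volume of a `(d-1)`-dimensional ball of radius `γ`. The ratio of the volumes of
balls in dimensions `d - 1` and `d` is a ratio of Gamma values, and log-convexity of `Γ` bounds it
by `√d / (2γ)`.
-/

open MeasureTheory Metric
open scoped ENNReal

/-- The density (w.r.t. Lebesgue measure) of the uniform distribution on the closed
Euclidean ball of radius `γ` centered at `x`. -/
noncomputable def ballUniformDensity {d : ℕ} (γ : ℝ) (x z : EuclideanSpace ℝ (Fin d)) : ℝ :=
  (closedBall x γ).indicator (fun _ => ((volume (closedBall x γ)).toReal)⁻¹) z

open Set
open scoped Real symmDiff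

theorem Real.Gamma_add_half_le_sqrt_mul_Gamma {x : ℝ} (hx : 0 < x) :
    Gamma (x + 1 / 2) ≤ √x * Gamma x := by
  have h := Gamma_mul_add_mul_le_rpow_Gamma_mul_rpow_Gamma hx (add_pos hx one_pos)
    (a := 1 / 2) (b := 1 / 2) (by norm_num) (by norm_num) (by norm_num)
  rw [show 1 / 2 * x + 1 / 2 * (x + 1) = x + 1 / 2 by ring, Gamma_add_one hx.ne',
    ← Real.sqrt_eq_rpow, ← Real.sqrt_eq_rpow, Real.sqrt_mul hx.le] at h
  calc Gamma (x + 1 / 2) ≤ √(Gamma x) * (√x * √(Gamma x)) := h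
    _ = √x * Gamma x := by rw [mul_left_comm, Real.mul_self_sqrt (Gamma_pos_of_pos hx).le]

theorem Real.two_mul_Gamma_le (m : ℕ) :
    2 * Gamma ((m + 1 : ℕ) / 2 + 1) ≤ √(m + 1 : ℕ) * √π * Gamma (m / 2 + 1) := by
  rcases Nat.eq_zero_or_pos m with rfl | hm
  -- for `m = 0` log-convexity only gives `2` where the exact value is `√π`
  · norm_num
    rw [show (3 / 2 : ℝ) = 1 / 2 + 1 by norm_num, Gamma_add_one (by norm_num), Gamma_one_half_eq]
    linarith
  · have hx : (0 : ℝ) < m / 2 + 1 := by positivity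
    have hsqrt : 2 * √(m / 2 + 1 : ℝ) ≤ √(m + 1 : ℕ) * √π := by
      rw [← Real.sqrt_mul (by positivity), show (2 : ℝ) = √4 by norm_num,
        ← Real.sqrt_mul (by norm_num)]
      have : (1 : ℝ) ≤ m := by exact_mod_cast hm
      push_cast
      exact Real.sqrt_le_sqrt (by nlinarith [Real.pi_gt_three])
    calc 2 * Gamma ((m + 1 : ℕ) / 2 + 1) = 2 * Gamma (m / 2 + 1 + 1 / 2) := by push_cast; ring_nf
      _ ≤ 2 * √(m / 2 + 1 : ℝ) * Gamma (m / 2 + 1) := by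
          rw [mul_assoc]; gcongr; exact Gamma_add_half_le_sqrt_mul_Gamma hx
      _ ≤ √(m + 1 : ℕ) * √π * Gamma (m / 2 + 1) := by gcongr

theorem Real.volume_Icc_diff_Icc_le (a b a' b' : ℝ) :
    volume (Icc a b \ Icc a' b') ≤ .ofReal (a' - a) + .ofReal (b - b') := by
  calc volume (Icc a b \ Icc a' b') ≤ volume (Ico a a' ∪ Ioc b' b) := by
        refine measure_mono fun s ⟨⟨has, hsb⟩, hs⟩ => ?_
        by_cases has' : a' ≤ s
        · exact Or.inr ⟨lt_of_not_ge fun hsb' => hs ⟨has', hsb'⟩, hsb⟩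
        · exact Or.inl ⟨has, lt_of_not_ge has'⟩
    _ ≤ volume (Ico a a') + volume (Ioc b' b) := measure_union_le _ _
    _ = .ofReal (a' - a) + .ofReal (b - b') := by rw [Real.volume_Ico, Real.volume_Ioc]

theorem Real.volume_Icc_symmDiff_Icc_add_le (a b : ℝ) {t : ℝ} (ht : 0 ≤ t) :
    volume (Icc a b ∆ Icc (a + t) (b + t)) ≤ .ofReal (2 * t) := by
  rw [measure_symmDiff_eq measurableSet_Icc.nullMeasurableSet
    measurableSet_Icc.nullMeasurableSet]
  calc volume (Icc a b \ Icc (a + t) (b + t)) + volume (Icc (a + t) (b + t) \ Icc a b)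
      ≤ (.ofReal (a + t - a) + .ofReal (b - (b + t)))
        + (.ofReal (a - (a + t)) + .ofReal (b + t - b)) :=
        add_le_add (Real.volume_Icc_diff_Icc_le ..) (Real.volume_Icc_diff_Icc_le ..)
    _ = .ofReal (2 * t) := by
        rw [add_sub_cancel_left, add_sub_cancel_left, sub_add_cancel_left, sub_add_cancel_left,
          ENNReal.ofReal_of_nonpos (neg_nonpos.2 ht), two_mul, ENNReal.ofReal_add ht ht,
          add_zero, zero_add]

theorem setOf_sq_add_le_sq_eq_Icc {q γ : ℝ} (hq : q ≤ γ ^ 2) :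
    {s : ℝ | s ^ 2 + q ≤ γ ^ 2} = Icc (-√(γ ^ 2 - q)) √(γ ^ 2 - q) := by
  ext s
  simp only [mem_ofPred_eq, ← le_sub_iff_add_le, Real.sq_le (sub_nonneg.2 hq), mem_Icc]

theorem volume_prod_symmDiff_translate_le {F : Type*} [NormedAddCommGroup F] [MeasurableSpace F]
    [OpensMeasurableSpace F] (ν : Measure F) [SFinite ν] {γ t : ℝ} (hγ : 0 ≤ γ) (ht : 0 ≤ t) :
    (volume.prod ν) ({p : ℝ × F | p.1 ^ 2 + ‖p.2‖ ^ 2 ≤ γ ^ 2}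
        ∆ {p | (p.1 - t) ^ 2 + ‖p.2‖ ^ 2 ≤ γ ^ 2})
      ≤ .ofReal (2 * t) * ν (closedBall 0 γ) := by
  have hmeas : MeasurableSet ({p : ℝ × F | p.1 ^ 2 + ‖p.2‖ ^ 2 ≤ γ ^ 2}
      ∆ {p | (p.1 - t) ^ 2 + ‖p.2‖ ^ 2 ≤ γ ^ 2}) :=
    (measurableSet_le (by fun_prop) measurable_const).symmDiff
      (measurableSet_le (by fun_prop) measurable_const)
  rw [Measure.prod_apply_symm hmeas, ← lintegral_indicator_const measurableSet_closedBall]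
  refine lintegral_mono fun w => ?_
  by_cases hw : w ∈ closedBall 0 γ
  · have hq : ‖w‖ ^ 2 ≤ γ ^ 2 := pow_le_pow_left₀ (norm_nonneg w) (mem_closedBall_zero_iff.1 hw) 2
    have hslice : (fun s => (s, w)) ⁻¹' ({p : ℝ × F | p.1 ^ 2 + ‖p.2‖ ^ 2 ≤ γ ^ 2}
        ∆ {p | (p.1 - t) ^ 2 + ‖p.2‖ ^ 2 ≤ γ ^ 2})
        = Icc (-√(γ ^ 2 - ‖w‖ ^ 2)) √(γ ^ 2 - ‖w‖ ^ 2)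
          ∆ Icc (-√(γ ^ 2 - ‖w‖ ^ 2) + t) (√(γ ^ 2 - ‖w‖ ^ 2) + t) := by
      rw [preimage_symmDiff, ← preimage_sub_const_Icc, ← setOf_sq_add_le_sq_eq_Icc hq]
      rfl
    rw [hslice, indicator_of_mem hw]
    exact Real.volume_Icc_symmDiff_Icc_add_le _ _ ht
  · have hslice : (fun s => (s, w)) ⁻¹' ({p : ℝ × F | p.1 ^ 2 + ‖p.2‖ ^ 2 ≤ γ ^ 2}
        ∆ {p | (p.1 - t) ^ 2 + ‖p.2‖ ^ 2 ≤ γ ^ 2}) = ∅ := by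
      have hγw : γ ^ 2 < ‖w‖ ^ 2 := by
        rw [mem_closedBall_zero_iff, not_le] at hw
        exact pow_lt_pow_left₀ hw hγ two_ne_zero
      refine eq_empty_of_forall_notMem fun s hs => ?_
      rcases mem_symmDiff.1 hs with ⟨hs, -⟩ | ⟨hs, -⟩
      · nlinarith [sq_nonneg s, hs.out]
      · nlinarith [sq_nonneg (s - t), hs.out]
    simp [hslice]

theorem volume_closedBall_symmDiff_closedBall_eq_of_norm_eq {E : Type*} [NormedAddCommGroup E]
    [InnerProductSpace ℝ E] [FiniteDimensional ℝ E] [MeasurableSpace E] [BorelSpace E]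
    {x y u : E} (hu : ‖u‖ = dist x y) (γ : ℝ) :
    volume (closedBall x γ ∆ closedBall y γ) = volume (closedBall 0 γ ∆ closedBall u γ) := by
  set R := Submodule.reflection (ℝ ∙ (u - (y - x)))ᗮ
  have hRu : R.symm (y - x) = u :=
    R.symm_apply_eq.2 (Submodule.reflection_sub (by rwa [← dist_eq_norm'])).symm
  calc volume (closedBall x γ ∆ closedBall y γ)
      = volume ((x + ·) ⁻¹' (closedBall x γ ∆ closedBall y γ)) :=
        (measure_preimage_add _ _ _).symm
    _ = volume (R ⁻¹' (closedBall 0 γ ∆ closedBall (y - x) γ)) := by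
        rw [R.measurePreserving.measure_preimage
          (measurableSet_closedBall.symmDiff measurableSet_closedBall).nullMeasurableSet]
        simp [preimage_symmDiff, preimage_add_closedBall]
    _ = volume (closedBall 0 γ ∆ closedBall u γ) := by
        rw [preimage_symmDiff, R.preimage_closedBall, R.preimage_closedBall, map_zero, hRu]

namespace EuclideanSpace

def headTail {m : ℕ} (z : EuclideanSpace ℝ (Fin (m + 1))) : ℝ × EuclideanSpace ℝ (Fin m) :=
  (z 0, WithLp.toLp 2 fun j => z j.succ)

theorem measurePreserving_headTail (m : ℕ) : MeasurePreserving (headTail (m := m)) := by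
  rw [Measure.volume_eq_prod]
  convert ((MeasurePreserving.id volume).prod (PiLp.volume_preserving_toLp (Fin m))).comp
    ((volume_preserving_piFinSuccAbove (fun _ => ℝ) 0).comp (PiLp.volume_preserving_ofLp _))
  ext z <;> simp [headTail, MeasurableEquiv.piFinSuccAbove_apply, Fin.tail]

theorem preimage_headTail {m : ℕ} {γ : ℝ} (hγ : 0 ≤ γ) (c : ℝ) :
    headTail ⁻¹' {p | (p.1 - c) ^ 2 + ‖p.2‖ ^ 2 ≤ γ ^ 2}
      = closedBall (single 0 c : EuclideanSpace ℝ (Fin (m + 1))) γ := by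
  ext z
  rw [mem_closedBall, dist_eq_norm, ← sq_le_sq₀ (norm_nonneg _) hγ, real_norm_sq_eq,
    Fin.sum_univ_succ]
  simp [headTail, real_norm_sq_eq]

theorem volume_closedBall_symmDiff_closedBall_le {m : ℕ} {γ : ℝ} (hγ : 0 ≤ γ)
    (x y : EuclideanSpace ℝ (Fin (m + 1))) :
    volume (closedBall x γ ∆ closedBall y γ)
      ≤ .ofReal (2 * dist x y) * volume (closedBall (0 : EuclideanSpace ℝ (Fin m)) γ) := by
  rw [volume_closedBall_symmDiff_closedBall_eq_of_norm_eq (u := single 0 (dist x y)) (by simp),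
    ← (PiLp.single_eq_zero_iff 2 0).2 rfl, ← preimage_headTail hγ, ← preimage_headTail hγ,
    ← preimage_symmDiff, (measurePreserving_headTail m).measure_preimage
      ((measurableSet_le (by fun_prop) measurable_const).symmDiff
        (measurableSet_le (by fun_prop) measurable_const)).nullMeasurableSet]
  simpa only [sub_zero, ← Measure.volume_eq_prod] using
    volume_prod_symmDiff_translate_le volume hγ dist_nonneg

theorem volume_closedBall_fin {k : ℕ} (x : EuclideanSpace ℝ (Fin k)) {r : ℝ} (hr : 0 ≤ r) :
    volume (closedBall x r) = .ofReal (r ^ k * √π ^ k / Real.Gamma (k / 2 + 1)) := by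
  cases k with
  | zero =>
    rw [volume_euclideanSpace_eq_dirac, Measure.dirac_apply_of_mem
      (mem_closedBall.2 (by simpa [Subsingleton.elim 0 x] using hr))]
    simp
  | succ k =>
    rw [volume_closedBall, Fintype.card_fin, ← ENNReal.ofReal_pow hr,
      ← ENNReal.ofReal_mul (by positivity), mul_div_assoc]

theorem two_mul_mul_volume_closedBall_le {m : ℕ} {γ : ℝ} (hγ : 0 ≤ γ)
    (x : EuclideanSpace ℝ (Fin (m + 1))) :
    2 * γ * (volume (closedBall (0 : EuclideanSpace ℝ (Fin m)) γ)).toReal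
      ≤ √(m + 1 : ℕ) * (volume (closedBall x γ)).toReal := by
  have hA : 0 < Real.Gamma (m / 2 + 1) := Real.Gamma_pos_of_pos (by positivity)
  have hB : 0 < Real.Gamma ((m + 1 : ℕ) / 2 + 1) := Real.Gamma_pos_of_pos (by positivity)
  have hratio :
      2 / Real.Gamma (m / 2 + 1) ≤ √(m + 1 : ℕ) * √π / Real.Gamma ((m + 1 : ℕ) / 2 + 1) := by
    rw [div_le_div_iff₀ hA hB]
    exact Real.two_mul_Gamma_le m
  rw [volume_closedBall_fin _ hγ, volume_closedBall_fin _ hγ, ENNReal.toReal_ofReal (by positivity),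
    ENNReal.toReal_ofReal (by positivity)]
  calc 2 * γ * (γ ^ m * √π ^ m / Real.Gamma (m / 2 + 1))
      = γ ^ (m + 1) * √π ^ m * (2 / Real.Gamma (m / 2 + 1)) := by ring
    _ ≤ γ ^ (m + 1) * √π ^ m * (√(m + 1 : ℕ) * √π / Real.Gamma ((m + 1 : ℕ) / 2 + 1)) := by gcongr
    _ = √(m + 1 : ℕ) * (γ ^ (m + 1) * √π ^ (m + 1) / Real.Gamma ((m + 1 : ℕ) / 2 + 1)) := by ring

end EuclideanSpace

theorem integral_abs_sub_ballUniformDensity {d : ℕ} (γ : ℝ) (x y : EuclideanSpace ℝ (Fin d)) :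
    ∫ z, |ballUniformDensity γ y z - ballUniformDensity γ x z|
      = (volume (closedBall y γ ∆ closedBall x γ)).toReal / (volume (closedBall x γ)).toReal := by
  have hV : volume (closedBall y γ) = volume (closedBall x γ) := by
    rw [Measure.addHaar_closedBall_center, Measure.addHaar_closedBall_center _ x]
  have hfun : (fun z => |ballUniformDensity γ y z - ballUniformDensity γ x z|)
      = (closedBall y γ ∆ closedBall x γ).indicator
        (fun _ => ((volume (closedBall x γ)).toReal)⁻¹) := by
    funext z
    by_cases hy : z ∈ closedBall y γ <;> by_cases hx : z ∈ closedBall x γ <;>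
      simp [ballUniformDensity, hV, hy, hx, mem_symmDiff]
  rw [hfun, integral_indicator_const _ (measurableSet_closedBall.symmDiff measurableSet_closedBall),
    smul_eq_mul, measureReal_def, div_eq_mul_inv]

theorem uniform_densities_L1_bound {d : ℕ} {γ : ℝ} (hγ : 0 < γ)
    (x y : EuclideanSpace ℝ (Fin d)) :
    ∫ z, |ballUniformDensity γ y z - ballUniformDensity γ x z|
      ≤ (Real.sqrt d / γ) * ‖y - x‖ := by
  cases d with
  | zero => simp [Subsingleton.elim y x]
  | succ m =>
    have hV : 0 < (volume (closedBall x γ)).toReal :=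
      ENNReal.toReal_pos (measure_closedBall_pos _ _ hγ).ne' measure_closedBall_lt_top.ne
    rw [integral_abs_sub_ballUniformDensity, div_le_iff₀ hV]
    set V₀ := (volume (closedBall (0 : EuclideanSpace ℝ (Fin m)) γ)).toReal
    calc (volume (closedBall y γ ∆ closedBall x γ)).toReal ≤ 2 * ‖y - x‖ * V₀ := by
          have h := EuclideanSpace.volume_closedBall_symmDiff_closedBall_le hγ.le y x
          rw [← ENNReal.ofReal_toReal measure_closedBall_lt_top.ne, ← ENNReal.ofReal_mul
            (by positivity), dist_eq_norm] at h
          exact ENNReal.toReal_le_of_le_ofReal (by positivity) h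
      _ = ‖y - x‖ / γ * (2 * γ * V₀) := by field_simp
      _ ≤ ‖y - x‖ / γ * (√(m + 1 : ℕ) * (volume (closedBall x γ)).toReal) := by
          gcongr ‖y - x‖ / γ * ?_
          exact EuclideanSpace.two_mul_mul_volume_closedBall_le hγ.le x
      _ = √(m + 1 : ℕ) / γ * ‖y - x‖ * (volume (closedBall x γ)).toReal := by ring
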